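/- arXiv:1208.4676 — 2 statements merged into one kernel-verified Lean document; each statement's English description precedes it below -/
import Mathlib

section
/- In a convex body K ⊆ ℝ^d, the set of exposed points of K is dense in the set of extreme points of K (Straszewicz's theorem). -/
/-!
An extreme point `x` of a compact convex set `K` does not lie in the convex hull of `K` minus a
neighbourhood `U` of `x`; in finite dimension that hull is compact (Carathéodory), so a hyperplane
cuts off a slice of `K` that contains `x` and lies in `U`. Let `w` be the normal of the slice.
For large `t` the point of `K` farthest from `x - t • w` lies in the slice, and a farthest point
of `K` from any centre is exposed, by the tangent hyperplane of the sphere through it.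
-/

open Set Module Topology RealInnerProductSpace

section Caratheodory

variable {𝕜 E : Type*} [Field 𝕜] [LinearOrder 𝕜] [IsStrictOrderedRing 𝕜]
  [AddCommGroup E] [Module 𝕜 E] [FiniteDimensional 𝕜 E]

theorem exists_fin_convexCombination_of_mem_convexHull {s : Set E} {x : E}
    (hx : x ∈ convexHull 𝕜 s) :
    ∃ w ∈ stdSimplex 𝕜 (Fin (finrank 𝕜 E + 1)), ∃ z : Fin (finrank 𝕜 E + 1) → E,
      (∀ i, z i ∈ s) ∧ ∑ i, w i • z i = x := by
  classical
  obtain ⟨ι, _, z, w, hzs, hz, hw, hw₁, rfl⟩ := eq_pos_convex_span_of_mem_convexHull hx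
  obtain ⟨i₀⟩ : Nonempty ι := by
    by_contra! h
    simp at hw₁
  have hcard : Fintype.card ι ≤ Fintype.card (Fin (finrank 𝕜 E + 1)) := by
    simpa using hz.card_le_finrank_succ.trans
      (Nat.succ_le_succ (Submodule.finrank_le _))
  obtain ⟨φ⟩ := Function.Embedding.nonempty_of_card_le hcard
  have hw₀ : ∀ j ∉ range φ, Function.extend φ w 0 j = 0 := fun j hj ↦
    Function.extend_apply' _ _ _ (by simpa using hj)
  have hz₀ : ∀ j ∉ range φ, Function.extend φ z (fun _ ↦ z i₀) j = z i₀ := fun j hj ↦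
    Function.extend_apply' _ _ _ (by simpa using hj)
  refine ⟨Function.extend φ w 0, ⟨fun j ↦ ?_, ?_⟩, Function.extend φ z fun _ ↦ z i₀,
    fun j ↦ ?_, ?_⟩
  · by_cases hj : j ∈ range φ
    · obtain ⟨i, rfl⟩ := hj
      simpa [φ.injective.extend_apply] using (hw i).le
    · exact (hw₀ j hj).ge
  · rw [← hw₁]
    exact (Fintype.sum_of_injective φ φ.injective _ _ hw₀
      fun i ↦ (φ.injective.extend_apply ..).symm).symm
  · by_cases hj : j ∈ range φ
    · obtain ⟨i, rfl⟩ := hj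
      simpa [φ.injective.extend_apply] using hzs (mem_range_self i)
    · simpa [hz₀ j hj] using hzs (mem_range_self i₀)
  · refine (Fintype.sum_of_injective φ φ.injective _ _ (fun j hj ↦ ?_)
      fun i ↦ ?_).symm
    · simp only [hw₀ j hj, zero_smul]
    · simp only [φ.injective.extend_apply]

end Caratheodory

theorem isCompact_convexHull {E : Type*} [AddCommGroup E] [Module ℝ E] [TopologicalSpace E]
    [IsTopologicalAddGroup E] [ContinuousSMul ℝ E] [FiniteDimensional ℝ E] {s : Set E}
    (hs : IsCompact s) : IsCompact (convexHull ℝ s) := by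
  set n := finrank ℝ E + 1
  have hsimplex : convexHull ℝ s = (fun p : (Fin n → ℝ) × (Fin n → E) ↦ ∑ i, p.1 i • p.2 i) ''
      (stdSimplex ℝ (Fin n) ×ˢ univ.pi fun _ ↦ s) := by
    refine Subset.antisymm (fun x hx ↦ ?_) ?_
    · obtain ⟨w, hw, z, hz, rfl⟩ := exists_fin_convexCombination_of_mem_convexHull hx
      exact ⟨(w, z), ⟨hw, fun i _ ↦ hz i⟩, rfl⟩
    · rintro _ ⟨⟨w, z⟩, ⟨hw, hz⟩, rfl⟩
      exact (convex_convexHull ℝ s).sum_mem (fun i _ ↦ hw.1 i) hw.2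
        fun i _ ↦ subset_convexHull ℝ s (hz i trivial)
  rw [hsimplex]
  exact ((isCompact_stdSimplex _ _).prod (isCompact_univ_pi fun _ ↦ hs)).image (by fun_prop)

section Slice

variable {E : Type*} [NormedAddCommGroup E] [NormedSpace ℝ E] [FiniteDimensional ℝ E]
  {K U : Set E} {x : E}

theorem IsCompact.exists_slice_subset_of_mem_extremePoints (hK : IsCompact K)
    (hconv : Convex ℝ K) (hx : x ∈ K.extremePoints ℝ) (hU : U ∈ 𝓝 x) :
    ∃ (l : StrongDual ℝ E) (u : ℝ), u < l x ∧ ∀ y ∈ K, u < l y → y ∈ U := by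
  set S := K \ interior U
  have hxS : x ∉ convexHull ℝ S := fun hxS ↦
    ((hconv.mem_extremePoints_iff_mem_sdiff_convexHull_sdiff.1 hx).2 <|
      convexHull_mono (sdiff_subset_sdiff_right <| singleton_subset_iff.2 <|
        mem_interior_iff_mem_nhds.2 hU) hxS)
  obtain ⟨l, u, hlS, hux⟩ := geometric_hahn_banach_closed_point (convex_convexHull ℝ S)
    (isCompact_convexHull (hK.diff isOpen_interior)).isClosed hxS
  refine ⟨l, u, hux, fun y hyK hy ↦ interior_subset ?_⟩
  by_contra hyU
  exact (hlS y (subset_convexHull ℝ S ⟨hyK, hyU⟩)).not_gt hy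

end Slice

section InnerProductSpace

variable {E : Type*} [NormedAddCommGroup E] [InnerProductSpace ℝ E] {K : Set E}

theorem mem_exposedPoints_of_isMaxOn_norm_sub {z f : E} (hf : f ∈ K)
    (hmax : IsMaxOn (fun y ↦ ‖y - z‖) K f) : f ∈ K.exposedPoints ℝ := by
  refine ⟨hf, innerSL ℝ (f - z), fun y hy ↦ ?_⟩
  have hsq : ‖y - z‖ ^ 2 ≤ ‖f - z‖ ^ 2 := pow_le_pow_left₀ (norm_nonneg _) (hmax hy) 2
  have key : ‖y - f‖ ^ 2 ≤ 2 * ⟪f - z, f - y⟫ := calc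
    ‖y - f‖ ^ 2 = ‖(f - z) - (y - z)‖ ^ 2 := by rw [norm_sub_rev, sub_sub_sub_cancel_right]
    _ = ‖f - z‖ ^ 2 - 2 * ⟪f - z, y - z⟫ + ‖y - z‖ ^ 2 := norm_sub_sq_real _ _
    _ ≤ 2 * ‖f - z‖ ^ 2 - 2 * ⟪f - z, y - z⟫ := by linarith
    _ = 2 * ⟪f - z, (f - z) - (y - z)⟫ := by
      rw [inner_sub_right (f - z) (f - z), real_inner_self_eq_norm_sq]; ring
    _ = 2 * ⟪f - z, f - y⟫ := by rw [sub_sub_sub_cancel_right]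
  rw [inner_sub_right] at key
  simp only [innerSL_apply_apply]
  exact ⟨by nlinarith [sq_nonneg ‖y - f‖], fun hle ↦ sub_eq_zero.1 <| norm_eq_zero.1 <|
    pow_eq_zero_iff two_ne_zero |>.1 <| le_antisymm (by linarith) (sq_nonneg _)⟩

theorem two_mul_inner_sub_le_of_norm_sub_le {x f w : E} {t : ℝ}
    (h : ‖x - (x - t • w)‖ ≤ ‖f - (x - t • w)‖) : 2 * t * ⟪w, x - f⟫ ≤ ‖f - x‖ ^ 2 := by
  have hsq := pow_le_pow_left₀ (norm_nonneg _) h 2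
  rw [sub_sub_cancel, sub_sub_eq_add_sub, add_sub_right_comm, norm_add_sq_real,
    real_inner_smul_right] at hsq
  rw [real_inner_comm, ← neg_sub, inner_neg_left]
  linarith

theorem IsCompact.exists_mem_exposedPoints_lt_inner (hK : IsCompact K) {x w : E} {u : ℝ}
    (hx : x ∈ K) (hu : u < ⟪w, x⟫) : ∃ f ∈ K.exposedPoints ℝ, u < ⟪w, f⟫ := by
  obtain ⟨R, hR⟩ := hK.isBounded.subset_closedBall x
  -- the farthest point `f` has `2 t ⟪w, x - f⟫ ≤ ‖f - x‖² ≤ R²`, whence this choice of `t`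
  obtain ⟨t, ht, hRt⟩ := exists_pos_lt_mul (sub_pos.2 hu) (R ^ 2)
  obtain ⟨f, hf, hmax⟩ := hK.exists_isMaxOn ⟨x, hx⟩
    (f := fun y ↦ ‖y - (x - t • w)‖) (by fun_prop)
  refine ⟨f, mem_exposedPoints_of_isMaxOn_norm_sub hf hmax, ?_⟩
  have hfar := two_mul_inner_sub_le_of_norm_sub_le (hmax hx)
  have hfR : ‖f - x‖ ≤ R := by simpa [dist_eq_norm] using hR hf
  rw [inner_sub_right] at hfar
  nlinarith [norm_nonneg (f - x)]

theorem IsCompact.extremePoints_subset_closure_exposedPoints [FiniteDimensional ℝ E]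
    (hK : IsCompact K) (hconv : Convex ℝ K) :
    K.extremePoints ℝ ⊆ closure (K.exposedPoints ℝ) := by
  intro x hx
  refine mem_closure_iff_nhds.2 fun U hU ↦ ?_
  obtain ⟨l, u, hux, hslice⟩ := hK.exists_slice_subset_of_mem_extremePoints hconv hx hU
  obtain ⟨f, hf, hfu⟩ := hK.exists_mem_exposedPoints_lt_inner hx.1
    (w := (InnerProductSpace.toDual ℝ E).symm l) (by rwa [InnerProductSpace.toDual_symm_apply])
  rw [InnerProductSpace.toDual_symm_apply] at hfu
  exact ⟨f, hslice f hf.1 hfu, hf⟩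

end InnerProductSpace

/-- Straszewicz's theorem: In a convex body K ⊆ ℝ^d, the set of exposed
points of K is dense in the set of extreme points of K. -/
theorem stmt_5 (d : ℕ) (K : Set (EuclideanSpace ℝ (Fin d)))
    (hK : IsCompact K) (hconv : Convex ℝ K) :
    K.extremePoints ℝ ⊆ closure (K.exposedPoints ℝ) :=
  hK.extremePoints_subset_closure_exposedPoints hconv
end

section
/- If through every point q of a C²-smooth convex hypersurface M ⊆ ℝ^{n+1} near p there passes a real (n−k)-dimensional affine plane locally contained in M, then the rank of the second fundamental form of M is at most k at every point near p. -/
/-!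
Write `B` for the Hessian `D²f(x)`, a symmetric bilinear form. Convexity makes `B` positive
semidefinite, since `t ↦ f (x + t • v)` has monotone derivative. A direction `(v, c)` of an affine
plane lying in the graph near `(x, f x)` gives a segment on which `f` is affine, so `c = Df(x) v`
and `B v v = 0`; for a positive semidefinite form this forces `B v = 0`. Hence the plane's
direction lies in the image of `ker B` under `v ↦ (v, Df(x) v)`, so `dim ker B ≥ n - k`, and
rank–nullity gives `rank B ≤ k`.
-/

open Set Filter Topology Module

lemma LinearMap.rank_le_of_finrank_le_add_finrank_ker {K V W : Type*} [Field K]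
    [AddCommGroup V] [Module K V] [FiniteDimensional K V] [AddCommGroup W] [Module K W]
    (φ : V →ₗ[K] W) {k : ℕ} (h : finrank K V ≤ k + finrank K (ker φ)) : φ.rank ≤ k := by
  have hsum := φ.finrank_range_add_finrank_ker
  rw [LinearMap.rank, ← finrank_eq_rank]
  exact_mod_cast (by omega : finrank K (range φ) ≤ k)

variable {E : Type*} [NormedAddCommGroup E] [NormedSpace ℝ E]

lemma ContinuousLinearMap.apply_eq_zero_of_apply_self_eq_zero {B : E →L[ℝ] E →L[ℝ] ℝ}
    (hsymm : ∀ v w, B v w = B w v) (hpsd : ∀ v, 0 ≤ B v v) {v : E} (hv : B v v = 0) :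
    B v = 0 := by
  ext w
  have hquad : ∀ t : ℝ, 0 ≤ B w w * (t * t) + 2 * B v w * t + 0 := by
    intro t
    have := hpsd (v + t • w)
    simp only [map_add, map_smul, add_apply, smul_apply, smul_eq_mul, hv, hsymm w v] at this
    linarith
  have := discrim_le_zero hquad
  rw [discrim] at this
  simpa using (by nlinarith [sq_nonneg (B v w)] : B v w = 0)

section LineRestriction

variable {f : E → ℝ} {x v : E}

lemma hasDerivAt_comp_add_smul {t : ℝ} (hf : DifferentiableAt ℝ f (x + t • v)) :
    HasDerivAt (fun s : ℝ => f (x + s • v)) (fderiv ℝ f (x + t • v) v) t :=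
  hf.hasFDerivAt.comp_hasDerivAt t (((hasDerivAt_id t).smul_const v).const_add x |>.congr_deriv
    (one_smul ℝ v))

lemma hasDerivAt_fderiv_comp_add_smul_apply (hf : DifferentiableAt ℝ (fderiv ℝ f) x) :
    HasDerivAt (fun t : ℝ => fderiv ℝ f (x + t • v) v) (fderiv ℝ (fderiv ℝ f) x v v) 0 := by
  have hline : HasDerivAt (fun t : ℝ => x + t • v) v 0 :=
    ((hasDerivAt_id (0 : ℝ)).smul_const v).const_add x |>.congr_deriv (one_smul ℝ v)
  have hf' : HasFDerivAt (fderiv ℝ f) (fderiv ℝ (fderiv ℝ f) x) (x + (0 : ℝ) • v) := by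
    simpa using hf.hasFDerivAt
  exact (ContinuousLinearMap.apply ℝ ℝ v).hasFDerivAt.comp_hasDerivAt 0
    (hf'.comp_hasDerivAt 0 hline)

lemma ConvexOn.fderiv_fderiv_apply_self_nonneg (hconv : ConvexOn ℝ univ f)
    (hf : Differentiable ℝ f) (hf2 : DifferentiableAt ℝ (fderiv ℝ f) x) (v : E) :
    0 ≤ fderiv ℝ (fderiv ℝ f) x v v := by
  have hline : ConvexOn ℝ univ (fun t : ℝ => f (x + t • v)) := by
    have := (hconv.translate_right x).comp_linearMap (LinearMap.toSpanSingleton ℝ E v)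
    rwa [preimage_univ, preimage_univ] at this
  have hderiv : deriv (fun t : ℝ => f (x + t • v)) = fun t => fderiv ℝ f (x + t • v) v :=
    funext fun t => (hasDerivAt_comp_add_smul (hf _)).deriv
  refine (hasDerivAt_fderiv_comp_add_smul_apply hf2).nonneg_of_monotone ?_
  rw [← hderiv, ← monotoneOn_univ]
  simpa using hline.monotoneOn_deriv fun t _ => (hasDerivAt_comp_add_smul (hf _)).differentiableAt

lemma fderiv_add_smul_apply_eq_of_eventually_eq_affine {t a c : ℝ}
    (hf : DifferentiableAt ℝ f (x + t • v)) (h : ∀ᶠ s in 𝓝 t, f (x + s • v) = a + s * c) :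
    fderiv ℝ f (x + t • v) v = c := by
  have haffine : HasDerivAt (fun s : ℝ => a + s * c) c t := by
    simpa using ((hasDerivAt_id t).mul_const c).const_add a
  exact (hasDerivAt_comp_add_smul hf).unique (haffine.congr_of_eventuallyEq h)

lemma fderiv_fderiv_apply_self_eq_zero_of_eventually_eq_affine {c : ℝ}
    (hf : Differentiable ℝ f) (hf2 : DifferentiableAt ℝ (fderiv ℝ f) x)
    (h : ∀ᶠ t in 𝓝 (0 : ℝ), f (x + t • v) = f x + t * c) :
    fderiv ℝ (fderiv ℝ f) x v v = 0 := by
  have hconst : (fun t : ℝ => fderiv ℝ f (x + t • v) v) =ᶠ[𝓝 0] fun _ => c := by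
    filter_upwards [h.eventually_nhds] with t ht
    exact fderiv_add_smul_apply_eq_of_eventually_eq_affine (hf _) ht
  exact (hasDerivAt_fderiv_comp_add_smul_apply hf2).unique
    ((hasDerivAt_const (0 : ℝ) c).congr_of_eventuallyEq hconst)

end LineRestriction

section PlaneInGraph

variable {f : E → ℝ} {P : AffineSubspace ℝ (E × ℝ)} {x : E} {U : Set (E × ℝ)}

lemma eventually_apply_add_smul_eq_of_mem_direction (hx : (x, f x) ∈ P) (hU : U ∈ 𝓝 (x, f x))
    (hPU : (P : Set (E × ℝ)) ∩ U ⊆ {z | z.2 = f z.1}) {v : E} {c : ℝ}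
    (hvc : (v, c) ∈ P.direction) : ∀ᶠ t in 𝓝 (0 : ℝ), f (x + t • v) = f x + t * c := by
  have hpath : Tendsto (fun t : ℝ => t • (v, c) +ᵥ (x, f x)) (𝓝 0) (𝓝 (x, f x)) :=
    Continuous.tendsto' (by fun_prop) _ _ (by simp)
  filter_upwards [hpath hU] with t ht
  have hmem := hPU ⟨AffineSubspace.vadd_mem_of_mem_direction (P.direction.smul_mem t hvc) hx, ht⟩
  simp only [mem_ofPred_eq, vadd_eq_add, Prod.smul_mk, Prod.mk_add_mk, smul_eq_mul] at hmem
  rw [add_comm x, add_comm (f x), hmem]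

lemma ConvexOn.direction_le_map_ker_fderiv_fderiv (hconv : ConvexOn ℝ univ f)
    (hf : ContDiff ℝ 2 f) (hx : (x, f x) ∈ P) (hU : U ∈ 𝓝 (x, f x))
    (hPU : (P : Set (E × ℝ)) ∩ U ⊆ {z | z.2 = f z.1}) :
    P.direction ≤ (LinearMap.ker (fderiv ℝ (fderiv ℝ f) x : E →ₗ[ℝ] E →L[ℝ] ℝ)).map
      (LinearMap.id.prod (fderiv ℝ f x : E →ₗ[ℝ] ℝ)) := by
  have hf1 : Differentiable ℝ f := hf.differentiable two_ne_zero
  have hf2 : DifferentiableAt ℝ (fderiv ℝ f) x :=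
    (hf.fderiv_right (m := 1) (by norm_num)).differentiable one_ne_zero x
  have hsymm : ∀ v w, fderiv ℝ (fderiv ℝ f) x v w = fderiv ℝ (fderiv ℝ f) x w v :=
    hf.contDiffAt.isSymmSndFDerivAt (by simp)
  rintro ⟨v, c⟩ hvc
  have hline := eventually_apply_add_smul_eq_of_mem_direction hx hU hPU hvc
  refine ⟨v, ?_, ?_⟩
  · exact ContinuousLinearMap.apply_eq_zero_of_apply_self_eq_zero hsymm
      (hconv.fderiv_fderiv_apply_self_nonneg hf1 hf2)
      (fderiv_fderiv_apply_self_eq_zero_of_eventually_eq_affine hf1 hf2 hline)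
  · have := fderiv_add_smul_apply_eq_of_eventually_eq_affine (x := x) (v := v) (t := 0)
      (by simpa using hf1 x) (by simpa using hline)
    simp only [zero_smul, add_zero] at this
    simp [this]

end PlaneInGraph

theorem stmt_19_general (n k : ℕ)
    (f : EuclideanSpace ℝ (Fin n) → ℝ)
    (hf : ContDiff ℝ 2 f) (hconv : ConvexOn ℝ univ f)
    (x₀ : EuclideanSpace ℝ (Fin n))
    (V : Set (EuclideanSpace ℝ (Fin n))) (hV : V ∈ nhds x₀)
    (hplanes : ∀ x ∈ V, ∃ P : AffineSubspace ℝ (EuclideanSpace ℝ (Fin n) × ℝ),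
      Module.finrank ℝ P.direction = n - k ∧ (x, f x) ∈ P ∧
      ∃ U ∈ nhds (x, f x), (P : Set (EuclideanSpace ℝ (Fin n) × ℝ)) ∩ U ⊆
        {z : EuclideanSpace ℝ (Fin n) × ℝ | z.2 = f z.1}) :
    ∃ V' ∈ nhds x₀, ∀ x ∈ V',
      LinearMap.rank ((fderiv ℝ (fderiv ℝ f) x :
        EuclideanSpace ℝ (Fin n) →ₗ[ℝ] (EuclideanSpace ℝ (Fin n) →L[ℝ] ℝ))) ≤ k := by
  refine ⟨V, hV, fun x hx => ?_⟩
  obtain ⟨P, hdim, hxP, U, hU, hPU⟩ := hplanes x hx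
  apply LinearMap.rank_le_of_finrank_le_add_finrank_ker
  have hker := (Submodule.finrank_mono
    (hconv.direction_le_map_ker_fderiv_fderiv hf hxP hU hPU)).trans (Submodule.finrank_map_le _ _)
  rw [finrank_euclideanSpace_fin]
  omega

/-- Let M be the graph of a C² convex function f : ℝⁿ → ℝ (a convex
hypersurface in ℝ^{n+1}). If through every point q = (x, f x) of M with x near x₀
there passes a real (n−k)-dimensional affine plane locally contained in M, then the
rank of the second fundamental form of M (the Hessian of f) is at most k at every
point near x₀. -/
theorem stmt_19 (n k : ℕ) (hk : k < n)
    (f : EuclideanSpace ℝ (Fin n) → ℝ)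
    (hf : ContDiff ℝ 2 f) (hconv : ConvexOn ℝ univ f)
    (x₀ : EuclideanSpace ℝ (Fin n))
    (V : Set (EuclideanSpace ℝ (Fin n))) (hV : V ∈ nhds x₀)
    (hplanes : ∀ x ∈ V, ∃ P : AffineSubspace ℝ (EuclideanSpace ℝ (Fin n) × ℝ),
      Module.finrank ℝ P.direction = n - k ∧ (x, f x) ∈ P ∧
      ∃ U ∈ nhds (x, f x), (P : Set (EuclideanSpace ℝ (Fin n) × ℝ)) ∩ U ⊆
        {z : EuclideanSpace ℝ (Fin n) × ℝ | z.2 = f z.1}) :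
    ∃ V' ∈ nhds x₀, ∀ x ∈ V',
      LinearMap.rank ((fderiv ℝ (fderiv ℝ f) x :
        EuclideanSpace ℝ (Fin n) →ₗ[ℝ] (EuclideanSpace ℝ (Fin n) →L[ℝ] ℝ))) ≤ k :=
  stmt_19_general n k f hf hconv x₀ V hV hplanes
end
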